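/- Let k be a finite field with |k| > 9 and n ≥ 2. Let pgl_n(k) = gl_n(k)/(scalars) and let psl_n(k) be the image of sl_n(k) in pgl_n(k). Then every non-zero additive subgroup H of pgl_n(k) invariant under conjugation by SL_n(k) contains psl_n(k). -/

import Mathlib

/-!
Let `V` be the preimage of `H` in `gl_n(k)`. Conjugating by the diagonal torus
`t ↦ diag (t ^ w a)` with `∑ w = 0` multiplies the entry `(a, b)` by `t ^ (w a - w b)`;
summing over `t ∈ kˣ` and using `∑ t ^ e = 0` for `0 < |e| < |k| - 1` shows that `V` is
stable under taking the part of weight zero. If a non-scalar element of `V` is not diagonal,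
two such projections isolate a pair of its opposite entries; in either case a transvection
then produces a nonzero elementary matrix `γ E_ij ∈ V`. Conjugation by `diag (t, t⁻¹)` multiplies it by
squares, and every element of a finite field is a sum of two squares, so `k E_ij ⊆ V`.
Transvections move `E_ij` to every other off-diagonal position and produce the differences
`E_jj - E_ii`; these span `sl_n(k)`.
-/

/-- The submodule of scalar matrices in `gl_n(k)`. -/
noncomputable def scalarMatrices (n : ℕ) (k : Type*) [Field k] :
    Submodule k (Matrix (Fin n) (Fin n) k) :=
  Submodule.span k {(1 : Matrix (Fin n) (Fin n) k)}

open Matrix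

theorem FiniteField.exists_sq_add_sq {k : Type*} [Field k] [Fintype k] (r : k) :
    ∃ x y : k, x ^ 2 + y ^ 2 = r := by
  by_cases h2 : ringChar k = 2
  · obtain ⟨x, hx⟩ := FiniteField.isSquare_of_char_two h2 r
    exact ⟨x, 0, by rw [hx]; ring⟩
  · obtain ⟨x, y, hxy⟩ := FiniteField.exists_root_sum_quadratic (Polynomial.degree_X_pow 2)
      (Polynomial.degree_X_pow_sub_C two_pos r) (FiniteField.odd_card_of_char_ne_two h2)
    refine ⟨x, y, ?_⟩
    simp only [Polynomial.eval_pow, Polynomial.eval_X, Polynomial.eval_sub,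
      Polynomial.eval_C] at hxy
    linear_combination hxy

theorem FiniteField.sum_units_zpow {k : Type*} [Field k] [Fintype k] [DecidableEq k] {e : ℤ}
    (he : |e| < Fintype.card k - 1) :
    ∑ t : kˣ, ((t ^ e : kˣ) : k) = if e = 0 then -1 else 0 := by
  let f : kˣ →* k := (Units.coeHom k).comp (zpowGroupHom e)
  have hf : f = 1 ↔ e = 0 := by
    refine ⟨fun h => Int.eq_zero_of_abs_lt_dvd (m := Fintype.card kˣ) ?_ ?_,
      fun h => by ext t; simp [f, h]⟩
    · rw [← Nat.card_eq_fintype_card, ← IsCyclic.exponent_eq_card,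
        Group.exponent_dvd_iff_forall_zpow_eq_one]
      exact fun t => Units.ext (DFunLike.congr_fun h t)
    · rwa [Fintype.card_units, Nat.cast_sub Fintype.card_pos, Nat.cast_one]
  change ∑ t, f t = _
  rw [sum_hom_units]
  by_cases h : f = 1
  · rw [if_pos h, if_pos (hf.mp h), Fintype.card_units, Nat.cast_sub Fintype.card_pos,
      FiniteField.cast_card_eq_zero, Nat.cast_one, zero_sub]
  · rw [if_neg h, if_neg (mt hf.mpr h), Nat.cast_zero]

theorem Finset.prod_zpow_eq_zpow_sum {ι G : Type*} [CommGroup G] (s : Finset ι) (f : ι → ℤ)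
    (a : G) : ∏ i ∈ s, a ^ f i = a ^ ∑ i ∈ s, f i :=
  Finset.cons_induction (by simp) (fun _ _ _ _ ↦ by simp [_root_.zpow_add, *]) s

section Weights

variable {ι : Type*} [DecidableEq ι]

def rootWeight (i j : ι) : ι → ℤ := Pi.single i 1 - Pi.single j 1

theorem sum_rootWeight [Fintype ι] (i j : ι) : ∑ a, rootWeight i j a = 0 := by
  simp [rootWeight, Finset.sum_sub_distrib]

theorem rootWeight_apply_left {i j : ι} (hij : i ≠ j) : rootWeight i j i = 1 := by
  simp [rootWeight, hij]

theorem rootWeight_apply_right {i j : ι} (hij : i ≠ j) : rootWeight i j j = -1 := by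
  simp [rootWeight, hij.symm]

theorem rootWeight_mem_Icc (i j a : ι) : rootWeight i j a ∈ Set.Icc (-2) 1 := by
  simp only [rootWeight, Pi.sub_apply, Pi.single_apply, Set.mem_Icc]
  split_ifs <;> omega

variable [Fintype ι]

theorem exists_weight_isolating_pair {i j : ι} (hij : i ≠ j) :
    ∃ v : ι → ℤ, ∑ a, v a = 0 ∧ (∀ a, v a ∈ Set.Icc (-2) 1) ∧
      ∀ a b, (v a = v b ∧ rootWeight i j a ≠ rootWeight i j b) ↔
        (a = i ∧ b = j ∨ a = j ∧ b = i) := by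
  by_cases hl : ∃ l, l ≠ i ∧ l ≠ j
  · obtain ⟨l, hli, hlj⟩ := hl
    refine ⟨Pi.single i 1 + Pi.single j 1 - Pi.single l 2, ?_, fun a => ?_, fun a b => ?_⟩
    · simp [Finset.sum_add_distrib, Finset.sum_sub_distrib]
    · simp only [Pi.add_apply, Pi.sub_apply, Pi.single_apply, Set.mem_Icc]
      split_ifs <;> simp_all
    · simp only [rootWeight, Pi.add_apply, Pi.sub_apply, Pi.single_apply]
      split_ifs <;> grind
  · have hcover : ∀ a, a = i ∨ a = j := fun a => by
      by_contra! ha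
      exact hl ⟨a, ha⟩
    refine ⟨0, by simp, fun a => by simp, fun a b => ?_⟩
    rcases hcover a with rfl | rfl <;> rcases hcover b with rfl | rfl <;>
      simp [rootWeight, hij, hij.symm]

end Weights

section ZeroWeightPart

variable {ι k : Type*} [Field k]

/-- The component of weight zero of `m` under the torus `t ↦ diagonal (t ^ w a)`. -/
def zeroWeightPart (w : ι → ℤ) : Matrix ι ι k →+ Matrix ι ι k where
  toFun m := of fun a b => if w a = w b then m a b else 0
  map_zero' := by ext; simp
  map_add' m m' := by ext a b; by_cases h : w a = w b <;> simp [h]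

theorem zeroWeightPart_apply (w : ι → ℤ) (m : Matrix ι ι k) (a b : ι) :
    zeroWeightPart w m a b = if w a = w b then m a b else 0 := rfl

theorem zeroWeightPart_single [DecidableEq ι] (w : ι → ℤ) (i j : ι) (c : k) :
    zeroWeightPart w (single i j c) = if w i = w j then single i j c else 0 := by
  ext a b
  rw [zeroWeightPart_apply]
  by_cases hab : i = a ∧ j = b
  · obtain ⟨rfl, rfl⟩ := hab
    split_ifs <;> simp
  · split_ifs <;> simp [hab]

end ZeroWeightPart

section SLConjInvariant

variable {ι k : Type*} [Fintype ι] [DecidableEq ι] [Field k]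

def IsSLConjInvariant (V : AddSubgroup (Matrix ι ι k)) : Prop :=
  ∀ g : SpecialLinearGroup ι k, ∀ m ∈ V,
    (g : Matrix ι ι k) * m * ((g⁻¹ : SpecialLinearGroup ι k) : Matrix ι ι k) ∈ V

namespace IsSLConjInvariant

variable {V : AddSubgroup (Matrix ι ι k)} (hV : IsSLConjInvariant V)
include hV

theorem mul_mul_mem {A B m : Matrix ι ι k} (hA : A.det = 1) (hAB : A * B = 1) (hm : m ∈ V) :
    A * m * B ∈ V := by
  have hB : B = adjugate A :=
    left_inv_eq_right_inv (mul_eq_one_comm.mp hAB) (by rw [mul_adjugate, hA, one_smul])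
  rw [hB]
  exact hV ⟨A, hA⟩ m hm

theorem transvection_conj_sub_mem {i j : ι} (hij : i ≠ j) (c : k) {m : Matrix ι ι k}
    (hm : m ∈ V) :
    single i j c * m - m * single i j c - single i j c * m * single i j c ∈ V := by
  have hinv : transvection i j c * transvection i j (-c) = 1 := by
    rw [transvection_mul_transvection_same _ _ hij, add_neg_cancel, transvection_zero]
  convert V.sub_mem (hV.mul_mul_mem (det_transvection_of_ne i j hij c) hinv hm) hm using 1
  rw [transvection, transvection, ← single_neg]
  noncomm_ring

theorem diagonal_zpow_conj_mem {w : ι → ℤ} (hw : ∑ a, w a = 0) (t : kˣ)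
    {m : Matrix ι ι k} (hm : m ∈ V) :
    (of fun a b => ((t ^ (w a - w b) : kˣ) : k) * m a b) ∈ V := by
  have hdet : (diagonal fun a => ((t ^ w a : kˣ) : k)).det = 1 := by
    rw [det_diagonal, ← Units.coe_prod, Finset.prod_zpow_eq_zpow_sum, hw, zpow_zero,
      Units.val_one]
  have hinv : (diagonal fun a => ((t ^ w a : kˣ) : k)) *
      diagonal (fun a => ((t ^ (-w a) : kˣ) : k)) = 1 := by
    rw [diagonal_mul_diagonal, ← diagonal_one]
    congr 1; ext a
    rw [← Units.val_mul, ← _root_.zpow_add, add_neg_cancel, zpow_zero, Units.val_one]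
  convert hV.mul_mul_mem hdet hinv hm using 1
  ext a b
  rw [mul_diagonal, diagonal_mul, of_apply, sub_eq_add_neg, _root_.zpow_add, Units.val_mul]
  ring

theorem zeroWeightPart_mem [Fintype k] (hk : 4 < Fintype.card k) {w : ι → ℤ}
    (hw : ∑ a, w a = 0) (hw_Icc : ∀ a, w a ∈ Set.Icc (-2) 1) {m : Matrix ι ι k}
    (hm : m ∈ V) :
    zeroWeightPart w m ∈ V := by
  classical
  have hbound : ∀ a b, |w a - w b| < Fintype.card k - 1 := fun a b => by
    obtain ⟨ha₁, ha₂⟩ := hw_Icc a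
    obtain ⟨hb₁, hb₂⟩ := hw_Icc b
    rw [abs_sub_lt_iff]
    omega
  have hsum : ∑ t : kˣ, of (fun a b => ((t ^ (w a - w b) : kˣ) : k) * m a b) ∈ V :=
    V.sum_mem fun t _ => hV.diagonal_zpow_conj_mem hw t hm
  have hsum_eq : ∑ t : kˣ, of (fun a b => ((t ^ (w a - w b) : kˣ) : k) * m a b) =
      -zeroWeightPart w m := by
    ext a b
    rw [Matrix.sum_apply, neg_apply, zeroWeightPart_apply]
    simp only [of_apply]
    rw [← Finset.sum_mul, FiniteField.sum_units_zpow (hbound a b)]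
    by_cases h : w a = w b <;> simp [h, sub_eq_zero]
  rw [hsum_eq] at hsum
  simpa using V.neg_mem hsum

theorem single_add_single_mem [Fintype k] (hk : 4 < Fintype.card k) {i j : ι} (hij : i ≠ j)
    {m : Matrix ι ι k} (hm : m ∈ V) : single i j (m i j) + single j i (m j i) ∈ V := by
  obtain ⟨v, hv0, hv_Icc, hv⟩ := exists_weight_isolating_pair hij
  have hw := hV.zeroWeightPart_mem hk (sum_rootWeight i j) (rootWeight_mem_Icc i j) hm
  convert hV.zeroWeightPart_mem hk hv0 hv_Icc (V.sub_mem hm hw) using 1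
  ext a b
  have := hv a b
  simp only [Matrix.add_apply, single_apply, zeroWeightPart_apply, Matrix.sub_apply]
  split_ifs <;> grind

-- The transvection by `single j i 1` turns the pair into `α • (E_jj - E_ii - E_ji)`, whose
-- zero-weight part for `rootWeight i j` is the diagonal part.
theorem single_swap_mem [Fintype k] (hk : 4 < Fintype.card k) {i j : ι} (hij : i ≠ j) {α β : k}
    (h : single i j α + single j i β ∈ V) :
    single j i α ∈ V ∧ single j j α - single i i α ∈ V := by
  have hY := hV.transvection_conj_sub_mem hij.symm 1 h
  simp only [mul_add, add_mul, single_mul_single_same, single_mul_single_of_ne _ _ _ _ hij,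
    one_mul, mul_one, add_zero] at hY
  have hdiag := hV.zeroWeightPart_mem hk (sum_rootWeight i j) (rootWeight_mem_Icc i j) hY
  simp only [map_sub, zeroWeightPart_single, rootWeight_apply_left hij,
    rootWeight_apply_right hij] at hdiag
  norm_num at hdiag
  refine ⟨?_, hdiag⟩
  simpa using V.sub_mem hdiag hY

theorem exists_single_mem [Fintype k] (hk : 4 < Fintype.card k) {m : Matrix ι ι k} (hm : m ∈ V)
    (hns : ∀ c : k, c • (1 : Matrix ι ι k) ≠ m) :
    ∃ i j γ, i ≠ j ∧ γ ≠ 0 ∧ single i j γ ∈ V := by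
  by_cases hoff : ∃ i j, i ≠ j ∧ m i j ≠ 0
  · obtain ⟨i, j, hij, hmij⟩ := hoff
    exact ⟨j, i, m i j, hij.symm, hmij,
      (hV.single_swap_mem hk hij (hV.single_add_single_mem hk hij hm)).1⟩
  push Not at hoff
  set d := m.diag
  have hm_diag : diagonal d = m := IsDiag.diagonal_diag hoff
  obtain ⟨i, j, hdij⟩ : ∃ i j, d i ≠ d j := by
    by_contra! hconst
    obtain hι | ⟨⟨i₀⟩⟩ := isEmpty_or_nonempty ι
    · exact hns 0 (Subsingleton.elim _ _)
    · refine hns (d i₀) ?_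
      rw [← hm_diag, smul_one_eq_diagonal]
      exact congrArg diagonal (funext fun a => (hconst a i₀).symm)
  have hij : i ≠ j := by rintro rfl; exact hdij rfl
  have hleft : single i j 1 * diagonal d = single i j (d j) := by
    ext a b; by_cases hab : i = a ∧ j = b <;> simp [hab]
  have hright : diagonal d * single i j 1 = single i j (d i) := by
    ext a b; by_cases hab : i = a ∧ j = b <;> simp [hab]
  have hY := hV.transvection_conj_sub_mem hij 1 hm
  rw [← hm_diag, hleft, hright, single_mul_single_of_ne _ _ _ _ hij.symm, sub_zero] at hY
  refine ⟨i, j, d j - d i, hij, sub_ne_zero.mpr hdij.symm, ?_⟩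
  rwa [sub_eq_add_neg, single_add, ← single_neg, ← sub_eq_add_neg]

theorem single_sq_mul_mem {i j : ι} (hij : i ≠ j) (x : k) {γ : k}
    (h : single i j γ ∈ V) : single i j (x ^ 2 * γ) ∈ V := by
  rcases eq_or_ne x 0 with rfl | hx
  · simp [V.zero_mem]
  convert hV.diagonal_zpow_conj_mem (sum_rootWeight i j) (Units.mk0 x hx) h using 1
  ext a b
  rw [of_apply, single_apply, single_apply]
  split_ifs with hab
  · obtain ⟨rfl, rfl⟩ := hab
    simp [rootWeight, hij, hij.symm]
  · simp

theorem single_mem_of_single_mem [Fintype k] {i j : ι} (hij : i ≠ j) {γ : k} (hγ : γ ≠ 0)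
    (h : single i j γ ∈ V) (δ : k) : single i j δ ∈ V := by
  obtain ⟨x, y, hxy⟩ := FiniteField.exists_sq_add_sq (δ / γ)
  have hδ : δ = x ^ 2 * γ + y ^ 2 * γ := by rw [← add_mul, hxy, div_mul_cancel₀ δ hγ]
  rw [hδ, single_add]
  exact V.add_mem (hV.single_sq_mul_mem hij x h) (hV.single_sq_mul_mem hij y h)

theorem single_mem_right {i j l : ι} (hjl : j ≠ l) (hil : i ≠ l) {δ : k}
    (h : single i j δ ∈ V) : single i l δ ∈ V := by
  have hY := hV.transvection_conj_sub_mem hjl 1 h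
  simp only [single_mul_single_of_ne _ _ _ _ hil.symm, single_mul_single_same, zero_mul,
    mul_one, zero_sub, sub_zero] at hY
  simpa using V.neg_mem hY

theorem single_mem_left {i j l : ι} (hli : l ≠ i) (hlj : l ≠ j) {δ : k}
    (h : single i j δ ∈ V) : single l j δ ∈ V := by
  have hY := hV.transvection_conj_sub_mem hli 1 h
  simpa [single_mul_single_of_ne _ _ _ _ hlj.symm] using hY

theorem single_mem_of_forall_single_mem [Fintype k] (hk : 4 < Fintype.card k) {i j : ι}
    (hij : i ≠ j) (hfull : ∀ δ : k, single i j δ ∈ V) {p q : ι} (hpq : p ≠ q) (δ : k) :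
    single p q δ ∈ V := by
  have hrow : ∀ q, q ≠ i → single i q δ ∈ V := fun q hqi => by
    rcases eq_or_ne q j with rfl | hqj
    · exact hfull δ
    · exact hV.single_mem_right hqj.symm hqi.symm (hfull δ)
  rcases eq_or_ne p i with rfl | hpi
  · exact hrow q hpq.symm
  rcases eq_or_ne q i with rfl | hqi
  · simpa using (hV.single_swap_mem hk hpi.symm (β := 0) (by simpa using hrow p hpi)).1
  · exact hV.single_mem_left hpi hpq (hrow q hqi)

theorem mem_of_trace_eq_zero [Fintype k] (hk : 4 < Fintype.card k) {i j : ι} (hij : i ≠ j)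
    (hfull : ∀ δ : k, single i j δ ∈ V) {m : Matrix ι ι k} (hm : m.trace = 0) :
    m ∈ V := by
  have hoff : ∀ a b, a ≠ b → ∀ δ : k, single a b δ ∈ V := fun a b hab =>
    hV.single_mem_of_forall_single_mem hk hij hfull hab
  have hdiag : ∀ a (δ : k), single a a δ - single i i δ ∈ V := fun a δ => by
    rcases eq_or_ne a i with rfl | hai
    · simp [V.zero_mem]
    · exact (hV.single_swap_mem hk hai.symm (β := 0) (by simpa using hoff i a hai.symm δ)).2
  have hdecomp :
      m = ∑ a, ∑ b, (single a b (m a b) - if a = b then single i i (m a b) else 0) := by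
    have htr : ∑ a, single i i (m a a) = 0 := by
      calc ∑ a, single i i (m a a) = single i i m.trace :=
            (map_sum (singleAddMonoidHom (α := k) i i) _ _).symm
        _ = 0 := by rw [hm, single_zero]
    simp only [Finset.sum_sub_distrib, Finset.sum_ite_eq, Finset.mem_univ, if_true, htr, sub_zero]
    exact matrix_eq_sum_single m
  rw [hdecomp]
  refine V.sum_mem fun a _ => V.sum_mem fun b _ => ?_
  split_ifs with hab
  · subst hab
    exact hdiag a _
  · simpa using hoff a b hab _

end IsSLConjInvariant

end SLConjInvariant

theorem stmt7_general {n : ℕ} (k : Type*) [Field k] [Fintype k]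
    (hk : 9 < Fintype.card k)
    (H : AddSubgroup (Matrix (Fin n) (Fin n) k ⧸ scalarMatrices n k))
    (hne : H ≠ ⊥)
    (hinv : ∀ g : Matrix.SpecialLinearGroup (Fin n) k,
      ∀ m : Matrix (Fin n) (Fin n) k, Submodule.Quotient.mk m ∈ H →
        (Submodule.Quotient.mk ((g : Matrix (Fin n) (Fin n) k) * m *
          ((g⁻¹ : Matrix.SpecialLinearGroup (Fin n) k) : Matrix (Fin n) (Fin n) k)) :
            Matrix (Fin n) (Fin n) k ⧸ scalarMatrices n k) ∈ H) :
    ∀ m : Matrix (Fin n) (Fin n) k, Matrix.trace m = 0 →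
      (Submodule.Quotient.mk m : Matrix (Fin n) (Fin n) k ⧸ scalarMatrices n k) ∈ H := by
  let V := H.comap (scalarMatrices n k).mkQ.toAddMonoidHom
  have hV : IsSLConjInvariant V := fun g m hm => hinv g m hm
  have hk4 : 4 < Fintype.card k := by omega
  obtain ⟨x, hxH, hx0⟩ := H.bot_or_exists_ne_zero.resolve_left hne
  obtain ⟨m₀, rfl⟩ := Submodule.Quotient.mk_surjective _ x
  have hns : ∀ c : k, c • (1 : Matrix (Fin n) (Fin n) k) ≠ m₀ := fun c hc =>
    hx0 ((Submodule.Quotient.mk_eq_zero _).mpr (Submodule.mem_span_singleton.mpr ⟨c, hc⟩))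
  obtain ⟨i, j, γ, hij, hγ, hγV⟩ := hV.exists_single_mem hk4 hxH hns
  intro m hm
  exact hV.mem_of_trace_eq_zero hk4 hij (hV.single_mem_of_single_mem hij hγ hγV) hm

/-- `pgl_n(k) := gl_n(k)/(scalars)`.  Every nonzero additive subgroup of `pgl_n(k)` invariant
under conjugation by `SL_n(k)` contains `psl_n(k)`, the image of the trace-zero matrices. -/
theorem stmt7 {n : ℕ} (hn : 2 ≤ n) (k : Type*) [Field k] [Fintype k]
    (hk : 9 < Fintype.card k)
    (H : AddSubgroup (Matrix (Fin n) (Fin n) k ⧸ scalarMatrices n k))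
    (hne : H ≠ ⊥)
    (hinv : ∀ g : Matrix.SpecialLinearGroup (Fin n) k,
      ∀ m : Matrix (Fin n) (Fin n) k, Submodule.Quotient.mk m ∈ H →
        (Submodule.Quotient.mk ((g : Matrix (Fin n) (Fin n) k) * m *
          ((g⁻¹ : Matrix.SpecialLinearGroup (Fin n) k) : Matrix (Fin n) (Fin n) k)) :
            Matrix (Fin n) (Fin n) k ⧸ scalarMatrices n k) ∈ H) :
    ∀ m : Matrix (Fin n) (Fin n) k, Matrix.trace m = 0 →
      (Submodule.Quotient.mk m : Matrix (Fin n) (Fin n) k ⧸ scalarMatrices n k) ∈ H :=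
  stmt7_general k hk H hne hinv
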